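/- arXiv:2204.03377 — 4 statements merged into one kernel-verified Lean document; each statement's English description precedes it below -/
import Mathlib

section
/- Let S be a semigroup with finite R-height, and let A be a left ideal of S such that every element of A is regular in S (i.e. A ⊆ Reg(S)). Then H_R(A) = n, where n is the maximum length of a chain of R-classes of S that intersect A. -/
/-!
Common definitions: Green's preorder/relation computed inside a subsemigroup,
chains of R-classes, R-height, bi-ideals, one- and two-sided ideals,
the kernel, and completely simple (sub)semigroups.
-/

variable {S : Type*}

/-- Green's preorder `≤_B` computed with multipliers from `B`:
`a ≤_B b` iff `a ∈ bB¹`, i.e. `a = b` or `a = b*s` for some `s ∈ B`. -/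
def RLe [Semigroup S] (B : Set S) (a b : S) : Prop :=
  a = b ∨ ∃ s ∈ B, a = b * s

/-- The strict version `<_B` of Green's preorder. -/
def RLt [Semigroup S] (B : Set S) (a b : S) : Prop :=
  RLe B a b ∧ ¬ RLe B b a

/-- Green's relation `R` computed with multipliers from `B`. -/
def REquiv [Semigroup S] (B : Set S) (a b : S) : Prop :=
  RLe B a b ∧ RLe B b a

/-- There is a chain of `n` (distinct, linearly ordered) `R`-classes of the
subsemigroup `B`, with all representatives lying in `C`. -/
def HasRChain [Semigroup S] (B C : Set S) (n : ℕ) : Prop :=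
  ∃ f : Fin n → S, (∀ i, f i ∈ C) ∧ ∀ i j : Fin n, i < j → RLt B (f i) (f j)

/-- There is a chain of `n` `R`-classes of `S`, each of which is contained in `C`. -/
def HasRChainInside [Semigroup S] (C : Set S) (n : ℕ) : Prop :=
  ∃ f : Fin n → S, (∀ i, ∀ x : S, REquiv Set.univ x (f i) → x ∈ C) ∧
    ∀ i j : Fin n, i < j → RLt (Set.univ : Set S) (f i) (f j)

/-- The `R`-height of the subsemigroup `B`: the supremum of the lengths
(cardinalities) of chains of `R_B`-classes. -/
noncomputable def RHeight [Semigroup S] (B : Set S) : ℕ∞ :=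
  sSup ((fun n : ℕ => (n : ℕ∞)) '' {n : ℕ | HasRChain B B n})

/-- A bi-ideal of `S`: a nonempty subset `B` with `BS¹B ⊆ B`. -/
def IsBiIdeal [Semigroup S] (B : Set S) : Prop :=
  B.Nonempty ∧ ∀ b ∈ B, ∀ c ∈ B, b * c ∈ B ∧ ∀ s : S, b * s * c ∈ B

/-- A right ideal of `S`: a nonempty subset `A` with `AS ⊆ A`. -/
def IsRightIdeal [Semigroup S] (A : Set S) : Prop :=
  A.Nonempty ∧ ∀ a ∈ A, ∀ s : S, a * s ∈ A

/-- A left ideal of `S`: a nonempty subset `A` with `SA ⊆ A`. -/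
def IsLeftIdeal [Semigroup S] (A : Set S) : Prop :=
  A.Nonempty ∧ ∀ a ∈ A, ∀ s : S, s * a ∈ A

/-- A two-sided ideal of `S`. -/
def IsTwoSidedIdealSet [Semigroup S] (A : Set S) : Prop :=
  IsRightIdeal A ∧ IsLeftIdeal A

/-- `K` is the kernel (minimum two-sided ideal) of `S`. -/
def IsKernel [Semigroup S] (K : Set S) : Prop :=
  IsTwoSidedIdealSet K ∧ ∀ A : Set S, IsTwoSidedIdealSet A → K ⊆ A

/-- A right ideal of the subsemigroup `K` of `S`. -/
def IsRightIdealIn [Semigroup S] (K A : Set S) : Prop :=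
  A.Nonempty ∧ A ⊆ K ∧ ∀ a ∈ A, ∀ k ∈ K, a * k ∈ A

/-- A left ideal of the subsemigroup `K` of `S`. -/
def IsLeftIdealIn [Semigroup S] (K A : Set S) : Prop :=
  A.Nonempty ∧ A ⊆ K ∧ ∀ a ∈ A, ∀ k ∈ K, k * a ∈ A

/-- A two-sided ideal of the subsemigroup `K` of `S`. -/
def IsIdealIn [Semigroup S] (K A : Set S) : Prop :=
  IsRightIdealIn K A ∧ IsLeftIdealIn K A

/-- The subsemigroup `K` of `S` is completely simple: it is simple (has no
proper two-sided ideals) and possesses both a minimal right ideal and a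
minimal left ideal. -/
def IsCompletelySimple [Semigroup S] (K : Set S) : Prop :=
  K.Nonempty ∧ (∀ a ∈ K, ∀ b ∈ K, a * b ∈ K) ∧
  (∀ A : Set S, IsIdealIn K A → A = K) ∧
  (∃ A : Set S, IsRightIdealIn K A ∧ ∀ A' : Set S, IsRightIdealIn K A' → A' ⊆ A → A' = A) ∧
  (∃ A : Set S, IsLeftIdealIn K A ∧ ∀ A' : Set S, IsLeftIdealIn K A' → A' ⊆ A → A' = A)

/-- If `S` has finite `R`-height and `A` is a left ideal of `S`
consisting of regular elements of `S`, then `H_R(A) = n`, where `n` is the maximum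
length of a chain of `R_S`-classes that intersect `A`. -/
theorem leftideal_regular_rheight_eq {S : Type*} [Semigroup S]
    (hfin : RHeight (Set.univ : Set S) ≠ ⊤)
    {A : Set S} (hA : IsLeftIdeal A)
    (hreg : ∀ a ∈ A, ∃ b : S, a = a * b * a)
    (n : ℕ)
    (hchain : HasRChain (Set.univ : Set S) A n)
    (hmax : ∀ m : ℕ, HasRChain (Set.univ : Set S) A m → m ≤ n) :
    RHeight A = (n : ℕ∞) := by
  -- Key: for a ∈ A (regular) and any b, RLe univ a b → RLe A a b.
  have key : ∀ a ∈ A, ∀ b : S, RLe (Set.univ : Set S) a b → RLe A a b := by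
    intro a ha b hab
    rcases hab with rfl | ⟨s, -, rfl⟩
    · exact Or.inl rfl
    · obtain ⟨t, ht⟩ := hreg _ ha
      refine Or.inr ⟨s * (t * (b * s)), hA.2 _ (hA.2 _ ha t) s, ?_⟩
      calc b * s = b * s * t * (b * s) := ht
        _ = b * (s * (t * (b * s))) := by simp [mul_assoc]
  have trivLe : ∀ a b : S, RLe A a b → RLe (Set.univ : Set S) a b := by
    rintro a b (rfl | ⟨s, -, rfl⟩)
    · exact Or.inl rfl
    · exact Or.inr ⟨s, trivial, rfl⟩
  have ltIff : ∀ a ∈ A, ∀ b ∈ A, (RLt A a b ↔ RLt (Set.univ : Set S) a b) := by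
    intro a ha b hb
    constructor
    · rintro ⟨h1, h2⟩
      exact ⟨trivLe _ _ h1, fun h => h2 (key _ hb _ h)⟩
    · rintro ⟨h1, h2⟩
      exact ⟨key _ ha _ h1, fun h => h2 (trivLe _ _ h)⟩
  have chIff : ∀ m : ℕ, HasRChain A A m ↔ HasRChain (Set.univ : Set S) A m := by
    intro m
    constructor
    · rintro ⟨f, hf, hlt⟩
      exact ⟨f, hf, fun i j hij => (ltIff _ (hf i) _ (hf j)).1 (hlt i j hij)⟩
    · rintro ⟨f, hf, hlt⟩
      exact ⟨f, hf, fun i j hij => (ltIff _ (hf i) _ (hf j)).2 (hlt i j hij)⟩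
  apply le_antisymm
  · apply sSup_le
    rintro x ⟨m, hm, rfl⟩
    simpa using (Nat.cast_le (α := ℕ∞)).2 (hmax m ((chIff m).1 hm))
  · exact le_sSup ⟨n, (chIff n).2 hchain, rfl⟩
end

section
/- Let S be a semigroup with finite R-height and let A be a two-sided ideal of S. Then H_R(A) ≤ n, where n is the maximum length of a chain of R-classes of S contained in A. In particular, H_R(A) ≤ H_R(S). -/
/-!
Common definitions: Green's preorder/relation computed inside a subsemigroup,
chains of R-classes, R-height, bi-ideals, one- and two-sided ideals,
the kernel, and completely simple (sub)semigroups.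
-/

variable {S : Type*}

/-- If `S` has finite `R`-height and `A` is a two-sided ideal of
`S`, then `H_R(A) ≤ n`, where `n` is the maximum length of a chain of `R_S`-classes
contained in `A`; in particular `H_R(A) ≤ H_R(S)`. -/
theorem ideal_rheight_le {S : Type*} [Semigroup S]
    (hfin : RHeight (Set.univ : Set S) ≠ ⊤)
    {A : Set S} (hA : IsTwoSidedIdealSet A) (n : ℕ)
    (hchain : HasRChainInside A n)
    (hmax : ∀ m : ℕ, HasRChainInside A m → m ≤ n) :
    RHeight A ≤ (n : ℕ∞) ∧ RHeight A ≤ RHeight (Set.univ : Set S) := by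
  -- key: strict R_A implies strict R_S
  have key : ∀ a b : S, RLt A a b → RLt (Set.univ : Set S) a b := by
    rintro a b ⟨hle, hnle⟩
    constructor
    · rcases hle with h | ⟨s, _, h⟩
      · exact Or.inl h
      · exact Or.inr ⟨s, trivial, h⟩
    · rintro (h | ⟨s, -, h⟩)
      · exact hnle (Or.inl h)
      · rcases hle with h' | ⟨t, ht, h'⟩
        · exact hnle (Or.inl (h' ▸ rfl))
        · refine hnle (Or.inr ⟨s * t * s, ?_, ?_⟩)
          · exact hA.1.2 _ (hA.2.2 _ ht s) s
          · calc b = a * s := h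
              _ = b * t * s := by rw [h']
              _ = (a * s) * (t * s) := by rw [← h]; simp [mul_assoc]
              _ = a * (s * t * s) := by simp [mul_assoc]
    -- done
  have chain_key : ∀ m : ℕ, HasRChain A A m → HasRChainInside A m := by
    rintro m ⟨f, hf, hstrict⟩
    refine ⟨f, ?_, fun i j hij => key _ _ (hstrict i j hij)⟩
    rintro i x ⟨hx, -⟩
    rcases hx with h | ⟨s, -, h⟩
    · exact h ▸ hf i
    · exact h ▸ hA.1.2 _ (hf i) s
  have h1 : RHeight A ≤ (n : ℕ∞) := by
    apply sSup_le
    rintro x ⟨m, hm, rfl⟩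
    show (m : ℕ∞) ≤ n
    exact_mod_cast hmax m (chain_key m hm)
  refine ⟨h1, ?_⟩
  apply sSup_le
  rintro x ⟨m, hm, rfl⟩
  apply le_sSup
  rcases hm with ⟨f, hf, hstrict⟩
  exact ⟨m, ⟨f, fun i => trivial, fun i j hij => key _ _ (hstrict i j hij)⟩, rfl⟩
end

section
/- Let S be a semigroup with finite R-height, let A = aS^1 be a principal right ideal of S, let I be a set with |I| ≥ 2, and let T = B(S, I) be the Brandt extension of S by I. Fix an element 1 ∈ I and consider the principal right ideal B = (1, a, 1)T^1 of T. Then H_R(T) = H_R(S) + 1 and H_R(B) = H_R(A) + 2. -/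
/-!
Common definitions: Green's preorder/relation computed inside a subsemigroup,
chains of R-classes, R-height, bi-ideals, one- and two-sided ideals,
the kernel, and completely simple (sub)semigroups.
-/

variable {S : Type*}

/-- The Brandt extension `𝓑(S, I)`: universe `(I × S × I) ∪ {0}`, where `zero`
is the adjoined zero element and `elt i s j` is the triple `(i, s, j)`. -/
inductive Brandt (S I : Type*) where
  | zero : Brandt S I
  | elt : I → S → I → Brandt S I

namespace Brandt

variable {I : Type*} [Semigroup S] [DecidableEq I]

/-- Multiplication of the Brandt extension:
`(i,s,j)(k,t,l) = (i,st,l)` if `j = k`, and `0` otherwise; `0` is a zero element. -/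
instance : Mul (Brandt S I) :=
  ⟨fun x y =>
    match x, y with
    | elt i s j, elt k t l => if j = k then elt i (s * t) l else zero
    | _, _ => zero⟩

theorem zero_mul' (x : Brandt S I) : (zero : Brandt S I) * x = zero := by
  cases x <;> rfl

theorem mul_zero' (x : Brandt S I) : x * (zero : Brandt S I) = zero := by
  cases x <;> rfl

theorem elt_mul_elt (i : I) (s : S) (j k : I) (t : S) (l : I) :
    (elt i s j : Brandt S I) * elt k t l =
      if j = k then elt i (s * t) l else zero := rfl

instance : Semigroup (Brandt S I) where
  mul_assoc a b c := by
    rcases a with _ | ⟨i, s, j⟩ <;> rcases b with _ | ⟨k, t, l⟩ <;>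
      rcases c with _ | ⟨m, u, p⟩ <;>
      simp only [zero_mul', mul_zero', elt_mul_elt]
    by_cases hjk : j = k <;> by_cases hlm : l = m <;>
      simp [elt_mul_elt, zero_mul', mul_zero', hjk, hlm, mul_assoc]

end Brandt

/-!
Both heights are computed by matching chains. In `T = 𝓑(S, I)` the zero lies below everything,
and `(i, s, j) <_R (i', t, j')` holds exactly when `i = i'` and `s <_R t`; so chains of `T` are
chains of `S` with `0` put underneath. In `B = (1, a, 1)T¹` every multiplier is `0` or has left
index `1`, so an element `(1, x, j)` with `j ≠ 1` sees only `0` below it, while on the elements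
`(1, x, 1)` the order of `B` is that of `A`. A chain of `B` is therefore
`0 < (1, x, j) <` (a copy of a chain of `A`), and `|I| ≥ 2` provides the index `j ≠ 1` for the
middle step.
-/

lemma sSup_natCast_image_eq_add {s t : Set ℕ} {k : ℕ} (ht : t.Nonempty)
    (h : ∀ n, n + k ∈ s ↔ n ∈ t) :
    sSup ((↑) '' s : Set ℕ∞) = sSup ((↑) '' t : Set ℕ∞) + k := by
  rw [ENat.sSup_add (ht.image _)]
  refine le_antisymm (sSup_le ?_) (iSup₂_le ?_)
  · rintro _ ⟨n, hn, rfl⟩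
    obtain ⟨m, hm⟩ := ht
    rcases le_or_gt k n with hkn | hnk
    · obtain ⟨n, rfl⟩ := Nat.exists_eq_add_of_le' hkn
      exact le_iSup₂_of_le (n : ℕ∞) ⟨n, (h n).1 hn, rfl⟩ (by push_cast; rfl)
    · exact le_iSup₂_of_le (m : ℕ∞) ⟨m, hm, rfl⟩ (by norm_cast; omega)
  · rintro _ ⟨n, hn, rfl⟩
    exact le_sSup ⟨n + k, (h n).2 hn, by push_cast; rfl⟩

section Chains

variable {T : Type*} [Semigroup S] [Semigroup T]

def IsRChain (B C : Set S) {n : ℕ} (f : Fin n → S) : Prop :=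
  (∀ i, f i ∈ C) ∧ ∀ i j, i < j → RLt B (f i) (f j)

lemma hasRChain_zero (B C : Set S) : HasRChain B C 0 :=
  ⟨Fin.elim0, fun i => i.elim0, fun i => i.elim0⟩

lemma IsRChain.cons {B C : Set S} {n : ℕ} {g : Fin n → S} (hg : IsRChain B C g) {c : S}
    (hc : c ∈ C) (hlt : ∀ i, RLt B c (g i)) :
    IsRChain B C (Fin.cons c g : Fin (n + 1) → S) := by
  refine ⟨Fin.cases (by simpa using hc) (by simpa using hg.1), fun i j hij => ?_⟩
  induction j using Fin.cases with
  | zero => exact absurd hij (Fin.not_lt_zero _)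
  | succ j =>
    induction i using Fin.cases with
    | zero => simpa using hlt j
    | succ i => simpa using hg.2 i j (Fin.succ_lt_succ_iff.mp hij)

lemma IsRChain.map {B C : Set S} {B' C' : Set T} {n : ℕ} {g : Fin n → S} (hg : IsRChain B C g)
    (φ : S → T) (hC : Set.MapsTo φ C C') (hφ : ∀ x y, RLt B x y → RLt B' (φ x) (φ y)) :
    IsRChain B' C' (φ ∘ g) :=
  ⟨fun i => hC (hg.1 i), fun i j hij => hφ _ _ (hg.2 i j hij)⟩

lemma HasRChain.of_rel {B C : Set S} {B' C' : Set T} {n : ℕ} (h : HasRChain B C n)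
    (ρ : S → T → Prop) (hρ : ∀ x ∈ C, ∃ y ∈ C', ρ x y)
    (hlt : ∀ x x' y y', ρ x y → ρ x' y' → RLt B x x' → RLt B' y y') : HasRChain B' C' n := by
  obtain ⟨f, hfC, hf⟩ := h
  choose g hgC hρg using fun i => hρ (f i) (hfC i)
  exact ⟨g, hgC, fun i j hij => hlt _ _ _ _ (hρg i) (hρg j) (hf i j hij)⟩

/-- The top `n` classes of a chain of length `n + k` each lie above a chain of length `k`. -/
lemma HasRChain.drop {B C D : Set S} {n k : ℕ}
    (hD : ∀ x ∈ C, HasRChain B {y ∈ C | RLt B y x} k → x ∈ D) (h : HasRChain B C (n + k)) :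
    HasRChain B D n := by
  obtain ⟨f, hfC, hf⟩ := h
  refine ⟨fun i => f (i.addNat k), fun i => hD _ (hfC _)
    ⟨fun j => f (j.castLE (Nat.le_add_left k n)), fun j => ⟨hfC _, hf _ _ ?_⟩,
      fun j j' hjj' => hf _ _ ?_⟩, fun i j hij => hf _ _ ?_⟩
  all_goals simp only [Fin.lt_def, Fin.val_addNat, Fin.val_castLE] at *; omega

lemma rHeight_eq_add {B : Set S} {B' : Set T} (k : ℕ)
    (h : ∀ n, HasRChain B' B' (n + k) ↔ HasRChain B B n) : RHeight B' = RHeight B + k :=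
  sSup_natCast_image_eq_add ⟨0, hasRChain_zero B B⟩ h

end Chains

def principalRightIdeal [Semigroup S] (a : S) : Set S :=
  {x | x = a ∨ ∃ s, x = a * s}

namespace Brandt

variable {I : Type*} [Semigroup S] [DecidableEq I]

lemma elt_mul_elt_self (i : I) (s : S) (j : I) (t : S) (l : I) :
    (elt i s j : Brandt S I) * elt j t l = elt i (s * t) l :=
  if_pos rfl

lemma eq_elt_of_elt_eq_elt_mul {i i' j j' : I} {s t : S} {x : Brandt S I}
    (h : elt i' t j' = elt i s j * x) : i' = i ∧ ∃ u, t = s * u ∧ x = elt j u j' := by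
  rcases x with _ | ⟨k, u, l⟩
  · exact absurd (h.trans (mul_zero' _)) nofun
  · rw [elt_mul_elt] at h
    split_ifs at h with hjk
    · obtain ⟨rfl, rfl, rfl⟩ := elt.inj h
      exact ⟨rfl, u, rfl, by rw [hjk]⟩

lemma zero_rlt_elt {B : Set (Brandt S I)} (hB : zero ∈ B) (i : I) (s : S) (j : I) :
    RLt B zero (elt i s j) :=
  ⟨Or.inr ⟨zero, hB, (mul_zero' _).symm⟩, by
    rintro (h | ⟨m, -, h⟩)
    · exact nomatch h
    · exact nomatch h.trans (zero_mul' m)⟩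

lemma ne_zero_of_rlt {B : Set (Brandt S I)} {x y : Brandt S I} (h : RLt B y x) : x ≠ zero := by
  rintro rfl
  have hy : y = zero := by
    rcases h.1 with hy | ⟨m, -, hy⟩
    · exact hy
    · exact hy.trans (zero_mul' m)
  exact h.2 (Or.inl hy.symm)

lemma rlt_univ_elt_elt_iff {i i' j j' : I} {s t : S} :
    RLt Set.univ (elt i s j : Brandt S I) (elt i' t j') ↔ i = i' ∧ RLt Set.univ s t := by
  constructor
  · rintro ⟨hle | ⟨x, -, hle⟩, hnge⟩
    · exact absurd (Or.inl hle.symm) hnge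
    obtain ⟨rfl, u, rfl, rfl⟩ := eq_elt_of_elt_eq_elt_mul hle
    refine ⟨rfl, Or.inr ⟨u, trivial, rfl⟩, ?_⟩
    rintro (hts | ⟨v, -, hts⟩)
    · refine hnge (Or.inr ⟨elt j u j', trivial, ?_⟩)
      rw [elt_mul_elt_self, ← hts, ← hts]
    · exact hnge (Or.inr ⟨elt j v j', trivial, by rw [elt_mul_elt_self, ← hts]⟩)
  · rintro ⟨rfl, hle, hnge⟩
    obtain ⟨u, -, rfl⟩ := hle.resolve_left fun hst => hnge (Or.inl hst.symm)
    refine ⟨Or.inr ⟨elt j' u j, trivial, (elt_mul_elt_self ..).symm⟩, ?_⟩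
    rintro (h | ⟨x, -, h⟩)
    · exact hnge (Or.inl (elt.inj h).2.1)
    · obtain ⟨-, v, hv, -⟩ := eq_elt_of_elt_eq_elt_mul h
      exact hnge (Or.inr ⟨v, trivial, hv⟩)

lemma hasRChain_succ_of_hasRChain (i₀ : I) {n : ℕ} (h : HasRChain (Set.univ : Set S) Set.univ n) :
    HasRChain (Set.univ : Set (Brandt S I)) Set.univ (n + 1) := by
  obtain ⟨g, hg⟩ := h
  have htop := IsRChain.map hg (fun s => (elt i₀ s i₀ : Brandt S I)) (Set.mapsTo_univ _ _)
    fun _ _ hst => rlt_univ_elt_elt_iff.2 ⟨rfl, hst⟩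
  exact ⟨_, htop.cons trivial fun _ => zero_rlt_elt (Set.mem_univ _) _ _ _⟩

lemma hasRChain_of_hasRChain_succ {n : ℕ}
    (h : HasRChain (Set.univ : Set (Brandt S I)) Set.univ (n + 1)) :
    HasRChain (Set.univ : Set S) Set.univ n := by
  have hnz : HasRChain (Set.univ : Set (Brandt S I)) {x | x ≠ zero} n :=
    h.drop fun x _ ⟨f, hf, _⟩ => ne_zero_of_rlt (hf 0).2
  refine hnz.of_rel (fun x s => ∃ i j, x = elt i s j) ?_ ?_
  · rintro (_ | ⟨i, s, j⟩) hx
    · exact absurd rfl hx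
    · exact ⟨s, trivial, i, j, rfl⟩
  · rintro _ _ s t ⟨i, j, rfl⟩ ⟨i', j', rfl⟩ hlt
    exact (rlt_univ_elt_elt_iff.1 hlt).2

section Principal

variable {a : S} {i₀ : I}

lemma zero_mem_principalRightIdeal :
    (zero : Brandt S I) ∈ principalRightIdeal (elt i₀ a i₀) :=
  Or.inr ⟨zero, (mul_zero' _).symm⟩

lemma elt_mul_mem_principalRightIdeal {x : S} (hx : x ∈ principalRightIdeal a) (y : S) (l : I) :
    (elt i₀ (x * y) l : Brandt S I) ∈ principalRightIdeal (elt i₀ a i₀) := by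
  obtain rfl | ⟨s, rfl⟩ := hx
  · exact Or.inr ⟨elt i₀ y l, (elt_mul_elt_self ..).symm⟩
  · exact Or.inr ⟨elt i₀ (s * y) l, by rw [elt_mul_elt_self, mul_assoc]⟩

lemma elt_mem_principalRightIdeal {x : S} (hx : x ∈ principalRightIdeal a) :
    (elt i₀ x i₀ : Brandt S I) ∈ principalRightIdeal (elt i₀ a i₀) := by
  obtain rfl | ⟨s, rfl⟩ := hx
  · exact Or.inl rfl
  · exact elt_mul_mem_principalRightIdeal (Or.inl rfl) s i₀

lemma eq_and_mem_of_elt_mem_principalRightIdeal {k l : I} {u : S}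
    (h : (elt k u l : Brandt S I) ∈ principalRightIdeal (elt i₀ a i₀)) :
    k = i₀ ∧ u ∈ principalRightIdeal a := by
  obtain h | ⟨x, h⟩ := h
  · obtain ⟨rfl, rfl, -⟩ := elt.inj h
    exact ⟨rfl, Or.inl rfl⟩
  · obtain ⟨rfl, v, rfl, -⟩ := eq_elt_of_elt_eq_elt_mul h
    exact ⟨rfl, Or.inr ⟨v, rfl⟩⟩

lemma rle_elt_elt_principalRightIdeal_iff {x y : S} :
    RLe (principalRightIdeal (elt i₀ a i₀)) (elt i₀ x i₀ : Brandt S I) (elt i₀ y i₀) ↔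
      RLe (principalRightIdeal a) x y := by
  constructor
  · rintro (h | ⟨m, hm, h⟩)
    · exact Or.inl (elt.inj h).2.1
    · obtain ⟨-, u, rfl, rfl⟩ := eq_elt_of_elt_eq_elt_mul h
      exact Or.inr ⟨u, (eq_and_mem_of_elt_mem_principalRightIdeal hm).2, rfl⟩
  · rintro (rfl | ⟨u, hu, rfl⟩)
    · exact Or.inl rfl
    · exact Or.inr ⟨elt i₀ u i₀, elt_mem_principalRightIdeal hu, (elt_mul_elt_self ..).symm⟩

lemma rlt_elt_elt_principalRightIdeal_iff {x y : S} :
    RLt (principalRightIdeal (elt i₀ a i₀)) (elt i₀ x i₀ : Brandt S I) (elt i₀ y i₀) ↔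
      RLt (principalRightIdeal a) x y := by
  simp only [RLt, rle_elt_elt_principalRightIdeal_iff]

/-- Every multiplier from `(i₀, a, i₀)T¹` has left index `i₀`, so it annihilates `(i, x, j)`
for `j ≠ i₀`. -/
lemma eq_or_eq_zero_of_rle_elt {i j : I} {x : S} {y : Brandt S I} (hj : j ≠ i₀)
    (h : RLe (principalRightIdeal (elt i₀ a i₀)) y (elt i x j)) : y = elt i x j ∨ y = zero := by
  rcases h with h | ⟨_ | ⟨k, u, l⟩, hm, h⟩
  · exact Or.inl h
  · exact Or.inr (h.trans (mul_zero' _))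
  · obtain ⟨rfl, -⟩ := eq_and_mem_of_elt_mem_principalRightIdeal hm
    exact Or.inr (by rwa [elt_mul_elt, if_neg hj] at h)

lemma exists_eq_elt_of_hasRChain_two {x : Brandt S I}
    (hx : x ∈ principalRightIdeal (elt i₀ a i₀))
    (h : HasRChain (principalRightIdeal (elt i₀ a i₀))
      {y ∈ principalRightIdeal (elt i₀ a i₀) | RLt (principalRightIdeal (elt i₀ a i₀)) y x} 2) :
    ∃ u ∈ principalRightIdeal a, x = elt i₀ u i₀ := by
  obtain ⟨f, hf, hf01⟩ := h
  rcases x with _ | ⟨k, u, l⟩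
  · exact absurd rfl (ne_zero_of_rlt (hf 0).2)
  obtain ⟨rfl, hu⟩ := eq_and_mem_of_elt_mem_principalRightIdeal hx
  obtain rfl | hl := eq_or_ne l k
  · exact ⟨u, hu, rfl⟩
  have below (i : Fin 2) : f i = zero := by
    refine (eq_or_eq_zero_of_rle_elt hl (hf i).2.1).resolve_left fun hfi => ?_
    exact (hf i).2.2 (Or.inl hfi.symm)
  exact ((hf01 0 1 Fin.zero_lt_one).2 (Or.inl ((below 1).trans (below 0).symm))).elim

lemma hasRChain_principal_add_two {j : I} (hj : j ≠ i₀) {n : ℕ}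
    (h : HasRChain (principalRightIdeal a) (principalRightIdeal a) n) :
    HasRChain (principalRightIdeal (elt i₀ a i₀ : Brandt S I))
      (principalRightIdeal (elt i₀ a i₀)) (n + 2) := by
  obtain ⟨g, hg⟩ := h
  obtain ⟨x₀, hx₀, hx₀g⟩ : ∃ x₀ ∈ principalRightIdeal a,
      ∀ i, RLe (principalRightIdeal a) x₀ (g i) := by
    rcases n with _ | n
    · exact ⟨a, Or.inl rfl, fun i => i.elim0⟩
    · refine ⟨g 0, hg.1 0, fun i => ?_⟩
      rcases (Fin.zero_le i).eq_or_lt with h0 | h0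
      · exact Or.inl (congrArg g h0)
      · exact (hg.2 0 i h0).1
  -- `(i₀, a * a, j)` lies in `(i₀, a, i₀)T¹` even when `(i₀, a, j)` does not.
  have hmid : (elt i₀ (x₀ * (a * a)) j : Brandt S I) ∈ principalRightIdeal (elt i₀ a i₀) :=
    elt_mul_mem_principalRightIdeal hx₀ _ _
  have hmid_lt (i) : RLt (principalRightIdeal (elt i₀ a i₀)) (elt i₀ (x₀ * (a * a)) j)
      (elt i₀ (g i) i₀ : Brandt S I) := by
    refine ⟨?_, fun hge => ?_⟩
    · rcases hx₀g i with hx | ⟨w, hw, hx⟩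
      · exact Or.inr ⟨elt i₀ (a * a) j, elt_mul_mem_principalRightIdeal (Or.inl rfl) _ _,
          by rw [elt_mul_elt_self, hx]⟩
      · exact Or.inr ⟨elt i₀ (w * (a * a)) j, elt_mul_mem_principalRightIdeal hw _ _,
          by rw [elt_mul_elt_self, hx, mul_assoc]⟩
    · rcases eq_or_eq_zero_of_rle_elt hj hge with h | h
      · exact hj (elt.inj h).2.2.symm
      · exact nomatch h
  have htop := IsRChain.map hg (fun x => (elt i₀ x i₀ : Brandt S I))
    (fun _ hx => elt_mem_principalRightIdeal hx)
    fun _ _ hxy => rlt_elt_elt_principalRightIdeal_iff.2 hxy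
  exact ⟨_, (htop.cons hmid hmid_lt).cons zero_mem_principalRightIdeal
    (Fin.cases (zero_rlt_elt zero_mem_principalRightIdeal _ _ _)
      fun _ => zero_rlt_elt zero_mem_principalRightIdeal _ _ _)⟩

lemma hasRChain_of_principal_add_two {n : ℕ}
    (h : HasRChain (principalRightIdeal (elt i₀ a i₀ : Brandt S I))
      (principalRightIdeal (elt i₀ a i₀)) (n + 2)) :
    HasRChain (principalRightIdeal a) (principalRightIdeal a) n := by
  have htop := h.drop (D := {x | ∃ u ∈ principalRightIdeal a, x = elt i₀ u i₀})
    fun _ hx hchain => exists_eq_elt_of_hasRChain_two hx hchain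
  refine htop.of_rel (fun x u => x = elt i₀ u i₀) (fun _ ⟨u, hu, hx⟩ => ⟨u, hu, hx⟩) ?_
  rintro _ _ x y rfl rfl hlt
  exact rlt_elt_elt_principalRightIdeal_iff.1 hlt

end Principal

end Brandt

theorem brandt_extension_rheight_general {S I : Type*} [Semigroup S] [DecidableEq I]
    (a : S) (hI : ∃ i j : I, i ≠ j) (one : I) :
    RHeight (Set.univ : Set (Brandt S I)) = RHeight (Set.univ : Set S) + 1 ∧
    RHeight {x : Brandt S I | x = Brandt.elt one a one ∨
        ∃ t : Brandt S I, x = Brandt.elt one a one * t} =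
      RHeight {x : S | x = a ∨ ∃ s : S, x = a * s} + 2 := by
  have : Nontrivial I := ⟨hI⟩
  obtain ⟨j, hj⟩ := exists_ne one
  exact ⟨rHeight_eq_add 1 fun _ =>
      ⟨Brandt.hasRChain_of_hasRChain_succ, Brandt.hasRChain_succ_of_hasRChain one⟩,
    rHeight_eq_add (B := principalRightIdeal a) (B' := principalRightIdeal (Brandt.elt one a one)) 2
      fun _ => ⟨Brandt.hasRChain_of_principal_add_two, Brandt.hasRChain_principal_add_two hj⟩⟩

/-- Let `S` have finite `R`-height, let `A = aS¹` be a principal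
right ideal of `S`, let `|I| ≥ 2`, and let `T = 𝓑(S, I)` be the Brandt extension of
`S` by `I`.  For a fixed `one ∈ I` and the principal right ideal
`B = (one, a, one)T¹` of `T`, we have `H_R(T) = H_R(S) + 1` and
`H_R(B) = H_R(A) + 2`. -/
theorem brandt_extension_rheight {S I : Type*} [Semigroup S] [DecidableEq I]
    (hfin : RHeight (Set.univ : Set S) ≠ ⊤)
    (a : S) (hI : ∃ i j : I, i ≠ j) (one : I) :
    RHeight (Set.univ : Set (Brandt S I)) = RHeight (Set.univ : Set S) + 1 ∧
    RHeight {x : Brandt S I | x = Brandt.elt one a one ∨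
        ∃ t : Brandt S I, x = Brandt.elt one a one * t} =
      RHeight {x : S | x = a ∨ ∃ s : S, x = a * s} + 2 :=
  brandt_extension_rheight_general a hI one
end

section
/- Let S be a right simple semigroup containing no idempotent, let a ∈ S be arbitrary, and consider the principal left ideal A = S^1 a = {a} ∪ Sa of S. Then the R-classes of the semigroup A are exactly {a} and Sa = A \ {a}, and consequently H_R(A) = 2 (while H_R(S) = 1). -/
/-!
Common definitions: Green's preorder/relation computed inside a subsemigroup,
chains of R-classes, R-height, bi-ideals, one- and two-sided ideals,
the kernel, and completely simple (sub)semigroups.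
-/

variable {S : Type*}

/-- Let `S` be a right simple semigroup with no idempotent, let
`a ∈ S`, and let `A = S¹a` be the principal left ideal generated by `a`.  Then the
`R_A`-classes are exactly `{a}` and `Sa = A \ {a}`, and hence `H_R(A) = 2`
(while `H_R(S) = 1`). -/
theorem rightsimple_principal_leftideal_rheight {S : Type*} [Semigroup S]
    (hrs : ∀ a b : S, ∃ x : S, b = a * x)
    (hni : ∀ e : S, e * e ≠ e)
    (a : S) (A : Set S) (hA : A = {x : S | x = a ∨ ∃ s : S, x = s * a}) :
    ({x : S | ∃ s : S, x = s * a} = A \ {a}) ∧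
    (∀ x ∈ A, ∀ y ∈ A,
      (REquiv A x y ↔ ((x = a ∧ y = a) ∨ ((∃ s : S, x = s * a) ∧ ∃ s : S, y = s * a)))) ∧
    RHeight A = 2 ∧
    RHeight (Set.univ : Set S) = 1 := by
  -- a is never of the form s * a
  have hne : ∀ s : S, a ≠ s * a := by
    intro s h
    obtain ⟨x, hx⟩ := hrs a s
    apply hni (x * a)
    have ha : a = a * x * a := by rw [← hx, ← h]
    calc x * a * (x * a) = x * (a * x * a) := by simp [mul_assoc]
      _ = x * a := by rw [← ha]
  have hmemSa : ∀ x : S, (∃ s : S, x = s * a) → x ∈ A := by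
    intro x hx; rw [hA]; exact Or.inr hx
  have haA : a ∈ A := by rw [hA]; exact Or.inl rfl
  have L2 : ∀ x : S, (∃ s : S, x = s * a) → RLe A x a := by
    rintro x ⟨s, rfl⟩
    obtain ⟨w, hw⟩ := hrs a s
    exact Or.inr ⟨w * a, hmemSa _ ⟨w, rfl⟩, by rw [hw, mul_assoc]⟩
  have L3 : ∀ x : S, (∃ s : S, x = s * a) → ¬ RLe A a x := by
    rintro x ⟨t, rfl⟩ (h | ⟨s, hs, h⟩)
    · exact hne t h
    · rw [hA] at hs
      rcases hs with hs | ⟨w, hw⟩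
      · rw [hs] at h
        exact hne (t * a) h
      · rw [hw] at h
        exact hne (t * a * w) (h.trans (mul_assoc (t * a) w a).symm)
  have L4 : ∀ x y : S, (∃ s : S, x = s * a) → (∃ s : S, y = s * a) → RLe A x y := by
    rintro x y ⟨s, rfl⟩ ⟨t, rfl⟩
    obtain ⟨v, hv⟩ := hrs (t * a) s
    exact Or.inr ⟨v * a, hmemSa _ ⟨v, rfl⟩, by rw [hv, mul_assoc]⟩
  have hAcases : ∀ x ∈ A, x = a ∨ ∃ s : S, x = s * a := by
    intro x hx; rw [hA] at hx; exact hx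
  -- the iff classification
  have hiff : ∀ x ∈ A, ∀ y ∈ A,
      (REquiv A x y ↔ ((x = a ∧ y = a) ∨ ((∃ s : S, x = s * a) ∧ ∃ s : S, y = s * a))) := by
    intro x hx y hy
    rcases hAcases x hx with rfl | hxS
    · rcases hAcases y hy with rfl | hyS
      · exact ⟨fun _ => Or.inl ⟨rfl, rfl⟩, fun _ => ⟨Or.inl rfl, Or.inl rfl⟩⟩
      · constructor
        · rintro ⟨h1, _⟩; exact absurd h1 (L3 _ hyS)
        · rintro (⟨_, hya⟩ | ⟨⟨s, hs⟩, _⟩)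
          · obtain ⟨t, ht⟩ := hyS
            exact absurd (hya.symm.trans ht) (hne t)
          · exact absurd hs (hne s)
    · rcases hAcases y hy with rfl | hyS
      · constructor
        · rintro ⟨_, h2⟩; exact absurd h2 (L3 _ hxS)
        · rintro (⟨hxa, _⟩ | ⟨_, ⟨s, hs⟩⟩)
          · obtain ⟨t, ht⟩ := hxS
            exact absurd (hxa.symm.trans ht) (hne t)
          · exact absurd hs (hne s)
      · exact ⟨fun _ => Or.inr ⟨hxS, hyS⟩, fun _ => ⟨L4 _ _ hxS hyS, L4 _ _ hyS hxS⟩⟩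
  -- key: a strict chain step in A forces the top to be a and the bottom in Sa
  have pair : ∀ x ∈ A, ∀ y ∈ A, RLt A x y → x ≠ a ∧ y = a := by
    intro x hx y hy ⟨h1, h2⟩
    rcases hAcases x hx with rfl | hxS
    · rcases hAcases y hy with rfl | hyS
      · exact absurd (Or.inl rfl) h2
      · exact absurd (L2 _ hyS) h2
    · rcases hAcases y hy with rfl | hyS
      · refine ⟨fun h => ?_, rfl⟩
        obtain ⟨s, hs⟩ := hxS; exact hne s (h ▸ hs)
      · exact absurd (L4 _ _ hyS hxS) h2
  refine ⟨?_, hiff, ?_, ?_⟩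
  · ext x
    simp only [Set.mem_setOf_eq, Set.mem_diff, Set.mem_singleton_iff]
    constructor
    · rintro ⟨s, rfl⟩
      exact ⟨hmemSa _ ⟨s, rfl⟩, fun h => hne s h.symm⟩
    · rintro ⟨hxA, hxa⟩
      rcases hAcases x hxA with rfl | h
      · exact absurd rfl hxa
      · exact h
  · -- RHeight A = 2
    have hub : ∀ n : ℕ, HasRChain A A n → n ≤ 2 := by
      intro n ⟨f, hfA, hlt⟩
      by_contra hn
      push_neg at hn
      have h01 := pair _ (hfA ⟨0, by omega⟩) _ (hfA ⟨1, by omega⟩)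
        (hlt ⟨0, by omega⟩ ⟨1, by omega⟩ (by simp [Fin.lt_def]))
      have h12 := pair _ (hfA ⟨1, by omega⟩) _ (hfA ⟨2, by omega⟩)
        (hlt ⟨1, by omega⟩ ⟨2, by omega⟩ (by simp [Fin.lt_def]))
      exact h12.1 h01.2
    have hchain2 : HasRChain A A 2 := by
      refine ⟨fun i => if (i : ℕ) = 0 then a * a else a, ?_, ?_⟩
      · intro i
        dsimp only
        split
        · exact hmemSa _ ⟨a, rfl⟩
        · exact haA
      · intro i j hij
        have hij' := Fin.lt_def.mp hij
        have hi2 := i.isLt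
        have hj2 := j.isLt
        have hvi : (i : ℕ) = 0 := by omega
        have hvj : (j : ℕ) = 1 := by omega
        simp only [hvi, hvj]
        norm_num
        exact ⟨L2 _ ⟨a, rfl⟩, L3 _ ⟨a, rfl⟩⟩
    apply le_antisymm
    · apply sSup_le
      rintro x ⟨n, hn, rfl⟩
      show (n : ℕ∞) ≤ 2
      exact_mod_cast hub n hn
    · exact le_sSup ⟨2, hchain2, by norm_num⟩
  · -- RHeight univ = 1
    have hle : ∀ x y : S, RLe (Set.univ : Set S) x y := by
      intro x y
      obtain ⟨s, hs⟩ := hrs y x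
      exact Or.inr ⟨s, trivial, hs⟩
    have hnlt : ∀ x y : S, ¬ RLt (Set.univ : Set S) x y := by
      rintro x y ⟨_, h2⟩; exact h2 (hle y x)
    have hub : ∀ n : ℕ, HasRChain (Set.univ : Set S) (Set.univ : Set S) n → n ≤ 1 := by
      intro n ⟨f, _, hlt⟩
      by_contra hn
      push_neg at hn
      exact hnlt _ _ (hlt ⟨0, by omega⟩ ⟨1, by omega⟩ (by simp [Fin.lt_def]))
    have hchain1 : HasRChain (Set.univ : Set S) (Set.univ : Set S) 1 := by
      refine ⟨fun _ => a, fun _ => trivial, ?_⟩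
      intro i j hij
      have := Fin.lt_def.mp hij
      omega
    apply le_antisymm
    · apply sSup_le
      rintro x ⟨n, hn, rfl⟩
      show (n : ℕ∞) ≤ 1
      exact_mod_cast hub n hn
    · exact le_sSup ⟨1, hchain1, by norm_num⟩
end
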